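/- Let O be the real algebra with basis {e^x : x ∈ F_8} and multiplication e^x e^y = (-1)^{tr(y x^6)} e^{x+y}. Define the associator [a,b,c] = (ab)c − a(bc). Then the associator is alternating: for all a, b, c ∈ O and every permutation σ of {1,2,3}, [a_{σ(1)}, a_{σ(2)}, a_{σ(3)}] = sign(σ)[a_1, a_2, a_3]. In particular [a,a,b] = [a,b,a] = [b,a,a] = 0, so O is an alternative algebra. -/

import Mathlib

open scoped Classical
noncomputable section

abbrev F8 := GaloisField 2 3

instance : Fintype F8 := Fintype.ofFinite F8

def tr (x : F8) : F8 := x + x ^ 2 + x ^ 4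

/-- The sign `(-1)^{φ(x,y)}` where `φ(x,y) = tr(y x⁶)`. -/
def sgn (x y : F8) : ℝ := if tr (y * x ^ 6) = 0 then 1 else -1

/-- Multiplication of the twisted group algebra `ℝ_σ[F₈]`, on coordinates:
octonions are functions `F8 → ℝ`, and `e^x e^y = (-1)^{tr(y x⁶)} e^{x+y}`. -/
def omul (a b : F8 → ℝ) : F8 → ℝ := fun z => ∑ x : F8, sgn x (z + x) * a x * b (z + x)

/-- The basis element `e^x`. -/
def e (x : F8) : F8 → ℝ := fun w => if w = x then 1 else 0

/-- Octonion conjugation: `a* = Re(a) - Im(a)`. -/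
def conj (a : F8 → ℝ) : F8 → ℝ := fun w => if w = 0 then a 0 else - a w

/-- The norm `N(a) = Σ aₓ²`. -/
def N (a : F8 → ℝ) : ℝ := ∑ x : F8, (a x) ^ 2

/-- The associator `[a,b,c] = (ab)c - a(bc)`. -/
def assoc (a b c : F8 → ℝ) : F8 → ℝ := omul (omul a b) c - omul a (omul b c)

/-!
Write `χ = (-1)^tr` and `f(x,y) = y x⁶` for the twist, so that `e^x e^y = χ(f(x,y)) e^(x+y)`.
On basis elements `[e^u, e^v, e^w] = K(u,v,w) e^(u+v+w)` with
`K(u,v,w) = χ(f(u,v+w) + f(v,w)) (χ(δf(u,v,w)) - 1)`, where `δf(u,v,w) = (uv(u+v))² w` is the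
coboundary of `f`. Because `tr` is invariant under Frobenius, `tr ∘ δf` is symmetric in its three
arguments; and `δf(u,v,w) ≠ 0` forces `u, v, u + v ≠ 0`, in which case `tr(v u⁶ + u v⁶) = 1`.
Together these make `K` change sign under every transposition of its arguments, so the trilinear
associator does too, and transpositions generate the symmetric group.
-/

namespace F8

theorem card_eq : Fintype.card F8 = 2 ^ 3 := by
  rw [← Nat.card_eq_fintype_card]
  exact GaloisField.card 2 3 (by norm_num)

theorem two_eq_zero : (2 : F8) = 0 := CharTwo.two_eq_zero

theorem pow_eight (x : F8) : x ^ 8 = x := by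
  simpa [card_eq] using FiniteField.pow_card x

theorem pow_seven_eq_one {x : F8} (hx : x ≠ 0) : x ^ 7 = 1 := by
  simpa [card_eq] using FiniteField.pow_card_sub_one_eq_one x hx

end F8

open F8 Equiv

theorem tr_add (x y : F8) : tr (x + y) = tr x + tr y := by
  simp only [tr]
  linear_combination (x * y + 2 * x ^ 3 * y + 3 * x ^ 2 * y ^ 2 + 2 * x * y ^ 3) * two_eq_zero

theorem tr_sq (x : F8) : tr (x ^ 2) = tr x := by
  simp only [tr]
  linear_combination pow_eight x

theorem tr_eq_zero_or_eq_one (x : F8) : tr x = 0 ∨ tr x = 1 := by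
  have h : tr x * (tr x - 1) = 0 := by
    simp only [tr]
    linear_combination pow_eight x + (x ^ 3 + x ^ 5 + x ^ 6) * two_eq_zero
  exact (mul_eq_zero.mp h).imp_right sub_eq_zero.mp

def traceChar : AddChar F8 ℝ where
  toFun t := if tr t = 0 then 1 else -1
  map_zero_eq_one' := by simp [tr]
  map_add_eq_mul' s t := by
    rcases tr_eq_zero_or_eq_one s with hs | hs <;> rcases tr_eq_zero_or_eq_one t with ht | ht <;>
      simp [tr_add, hs, ht, one_add_one_eq_two, two_eq_zero]

theorem traceChar_apply (t : F8) : traceChar t = if tr t = 0 then 1 else -1 := rfl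

theorem sgn_eq_traceChar (x y : F8) : sgn x y = traceChar (y * x ^ 6) := rfl

theorem traceChar_congr_tr {s t : F8} (h : tr s = tr t) : traceChar s = traceChar t := by
  rw [traceChar_apply, traceChar_apply, h]

theorem tr_mul_pow_six_add_mul_pow_six {u v : F8} (hu : u ≠ 0) (hv : v ≠ 0) (huv : u + v ≠ 0) :
    tr (v * u ^ 6 + u * v ^ 6) = 1 := by
  have hu7 := pow_seven_eq_one hu
  have hv7 := pow_seven_eq_one hv
  -- with `u⁷ = v⁷ = 1` the trace is `s = ∑_{i=1}^6 u^(7-i) v^i`, and in characteristic 2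
  -- `(u + v) s = u⁷v + uv⁷ = u + v`
  set s := u ^ 6 * v + u ^ 5 * v ^ 2 + u ^ 4 * v ^ 3 + u ^ 3 * v ^ 4 + u ^ 2 * v ^ 5 + u * v ^ 6
  have htr : tr (v * u ^ 6 + u * v ^ 6) = s := by
    simp only [tr]
    linear_combination (v ^ 2 * u ^ 5 + v ^ 4 * u ^ 3 * (u ^ 14 + u ^ 7 + 1)) * hu7 +
      (u ^ 2 * v ^ 5 + u ^ 4 * v ^ 3 * (v ^ 14 + v ^ 7 + 1)) * hv7 +
      (u ^ 7 * v ^ 7 + 2 * u ^ 19 * v ^ 9 + 2 * u ^ 9 * v ^ 19 + 3 * u ^ 14 * v ^ 14) * two_eq_zero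
  have hs : (u + v) * s = (u + v) * 1 := by
    linear_combination v * hu7 + u * hv7 +
      (u ^ 6 * v ^ 2 + u ^ 5 * v ^ 3 + u ^ 4 * v ^ 4 + u ^ 3 * v ^ 5 + u ^ 2 * v ^ 6) * two_eq_zero
  rw [htr]
  exact mul_left_cancel₀ huv hs

/-- In characteristic 2 this is the coboundary `f(v,w) + f(u+v,w) + f(u,v+w) + f(u,v)` of the
twist `f(x,y) = y x⁶` in the exponent of `sgn`. -/
def coboundary (u v w : F8) : F8 := (u * v * (u + v)) ^ 2 * w

theorem coboundary_comm (u v w : F8) : coboundary v u w = coboundary u v w := by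
  unfold coboundary; ring

theorem tr_coboundary_swap (u v w : F8) : tr (coboundary u v w) = tr (coboundary u w v) := by
  have h₁ : coboundary u v w = (u ^ 2 * v * w ^ 4) ^ 2 + u ^ 2 * v ^ 4 * w := by
    unfold coboundary
    linear_combination (-(u ^ 4 * v ^ 2)) * pow_eight w + u ^ 3 * v ^ 3 * w * two_eq_zero
  have h₂ : coboundary u w v = (u ^ 2 * v ^ 4 * w) ^ 2 + u ^ 2 * v * w ^ 4 := by
    unfold coboundary
    linear_combination (-(u ^ 4 * w ^ 2)) * pow_eight v + u ^ 3 * w ^ 3 * v * two_eq_zero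
  rw [h₁, h₂, tr_add, tr_add, tr_sq, tr_sq, add_comm]

theorem tr_coboundary_rotate (u v w : F8) : tr (coboundary v w u) = tr (coboundary u v w) := by
  rw [coboundary_comm w v u, tr_coboundary_swap w v u, coboundary_comm u w v,
    tr_coboundary_swap u w v]

theorem traceChar_coboundary_sub_one_mul (u v w : F8) :
    (traceChar (coboundary u v w) - 1) * (traceChar (v * u ^ 6 + u * v ^ 6) + 1) = 0 := by
  by_cases h : u * v * (u + v) = 0
  · simp [traceChar_apply, coboundary, h, tr]
  · obtain ⟨⟨hu, hv⟩, huv⟩ := mul_ne_zero_iff.mp h |>.imp_left mul_ne_zero_iff.mp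
    simp [traceChar_apply, tr_mul_pow_six_add_mul_pow_six hu hv huv]

/-- `[e^u, e^v, e^w] = assocCoeff u v w • e^(u+v+w)`. -/
def assocCoeff (u v w : F8) : ℝ := sgn u v * sgn (u + v) w - sgn u (v + w) * sgn v w

theorem assocCoeff_eq (u v w : F8) :
    assocCoeff u v w = traceChar ((v + w) * u ^ 6 + w * v ^ 6) *
      (traceChar (coboundary u v w) - 1) := by
  have h : v * u ^ 6 + w * (u + v) ^ 6 = (v + w) * u ^ 6 + w * v ^ 6 + coboundary u v w := by
    unfold coboundary
    linear_combination (3 * u ^ 5 * v + 7 * u ^ 4 * v ^ 2 + 9 * u ^ 3 * v ^ 3 +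
      7 * u ^ 2 * v ^ 4 + 3 * u * v ^ 5) * w * two_eq_zero
  rw [assocCoeff, sgn_eq_traceChar, sgn_eq_traceChar, sgn_eq_traceChar, sgn_eq_traceChar,
    ← AddChar.map_add_eq_mul, ← AddChar.map_add_eq_mul, h,
    AddChar.map_add_eq_mul traceChar _ (coboundary u v w)]
  ring

theorem assocCoeff_swap_left (u v w : F8) : assocCoeff v u w = -assocCoeff u v w := by
  have h : (u + w) * v ^ 6 + w * u ^ 6 = (v + w) * u ^ 6 + w * v ^ 6 + (v * u ^ 6 + u * v ^ 6) := by
    linear_combination (-(v * u ^ 6)) * two_eq_zero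
  rw [assocCoeff_eq, assocCoeff_eq, coboundary_comm, h, AddChar.map_add_eq_mul]
  linear_combination traceChar ((v + w) * u ^ 6 + w * v ^ 6) *
    traceChar_coboundary_sub_one_mul u v w

theorem assocCoeff_swap_right (u v w : F8) : assocCoeff u w v = -assocCoeff u v w := by
  have h : (w + v) * u ^ 6 + v * w ^ 6 = (v + w) * u ^ 6 + w * v ^ 6 + (w * v ^ 6 + v * w ^ 6) := by
    linear_combination (-(w * v ^ 6)) * two_eq_zero
  rw [assocCoeff_eq, assocCoeff_eq, traceChar_congr_tr (tr_coboundary_swap u w v), h,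
    AddChar.map_add_eq_mul, ← traceChar_congr_tr (tr_coboundary_rotate u v w)]
  linear_combination traceChar ((v + w) * u ^ 6 + w * v ^ 6) *
    traceChar_coboundary_sub_one_mul v w u

theorem assoc_apply (a b c : F8 → ℝ) (z : F8) :
    assoc a b c z = ∑ u, ∑ v, assocCoeff u v (z + u + v) * (a u * b v * c (z + u + v)) := by
  have h₁ : omul (omul a b) c z =
      ∑ u, ∑ v, sgn u v * sgn (u + v) (z + u + v) * (a u * b v * c (z + u + v)) := by
    simp only [omul, Finset.mul_sum, Finset.sum_mul]
    rw [Finset.sum_comm]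
    refine Finset.sum_congr rfl fun u _ => Fintype.sum_equiv (Equiv.addLeft u) _ _ fun x => ?_
    simp only [Equiv.coe_addLeft, add_assoc, CharTwo.add_cancel_left, add_comm x u]
    ring
  have h₂ : omul a (omul b c) z =
      ∑ u, ∑ v, sgn u (v + (z + u + v)) * sgn v (z + u + v) * (a u * b v * c (z + u + v)) := by
    simp only [omul, Finset.mul_sum]
    refine Finset.sum_congr rfl fun u _ => Finset.sum_congr rfl fun v _ => ?_
    rw [show v + (z + u + v) = z + u by linear_combination v * two_eq_zero]
    ring
  rw [assoc, Pi.sub_apply, h₁, h₂, ← Finset.sum_sub_distrib]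
  refine Finset.sum_congr rfl fun u _ => ?_
  rw [← Finset.sum_sub_distrib]
  refine Finset.sum_congr rfl fun v _ => ?_
  rw [assocCoeff]
  ring

theorem assoc_swap_left (a b c : F8 → ℝ) : assoc b a c = -assoc a b c := by
  ext z
  simp only [assoc_apply, Pi.neg_apply, ← Finset.sum_neg_distrib]
  rw [Finset.sum_comm]
  refine Finset.sum_congr rfl fun u _ => Finset.sum_congr rfl fun v _ => ?_
  rw [add_right_comm z v u, assocCoeff_swap_left]
  ring

theorem assoc_swap_right (a b c : F8 → ℝ) : assoc a c b = -assoc a b c := by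
  ext z
  simp only [assoc_apply, Pi.neg_apply, ← Finset.sum_neg_distrib]
  refine Finset.sum_congr rfl fun u _ =>
    Fintype.sum_equiv (Equiv.addLeft (z + u)) _ _ fun v => ?_
  simp only [Equiv.coe_addLeft, CharTwo.add_cancel_left]
  rw [assocCoeff_swap_right]
  ring

theorem assoc_swap_outer (a b c : F8 → ℝ) : assoc c b a = -assoc a b c := by
  rw [assoc_swap_left b c a, assoc_swap_right b a c, assoc_swap_left a b c, neg_neg]

theorem Equiv.Perm.apply_comp_eq_sign_smul {ι α M : Type*} [DecidableEq ι] [Fintype ι]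
    [AddCommGroup M] (f : (ι → α) → M) (hf : ∀ a i j, i ≠ j → f (a ∘ swap i j) = -f a)
    (σ : Perm ι) (a : ι → α) : f (a ∘ σ) = (Perm.sign σ : ℤ) • f a := by
  induction σ using Perm.swap_induction_on generalizing a with
  | one => simp
  | swap_mul σ i j hij ih =>
    rw [Perm.coe_mul, ← Function.comp_assoc, ih, hf a i j hij, Perm.sign_mul,
      Perm.sign_swap hij]
    simp

theorem assoc_comp_swap (a : Fin 3 → F8 → ℝ) (i j : Fin 3) (hij : i ≠ j) :
    assoc ((a ∘ swap i j) 0) ((a ∘ swap i j) 1) ((a ∘ swap i j) 2) =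
      -assoc (a 0) (a 1) (a 2) := by
  fin_cases i <;> fin_cases j <;> simp [swap_apply_of_ne_of_ne] at hij ⊢ <;>
    first
      | exact assoc_swap_left _ _ _
      | exact assoc_swap_right _ _ _
      | exact assoc_swap_outer _ _ _

theorem associator_alternating :
    (∀ (a : Fin 3 → (F8 → ℝ)) (σ : Equiv.Perm (Fin 3)),
      assoc (a (σ 0)) (a (σ 1)) (a (σ 2)) =
        ((Equiv.Perm.sign σ : ℤ)) • assoc (a 0) (a 1) (a 2)) ∧
    (∀ a b : F8 → ℝ, assoc a a b = 0 ∧ assoc a b a = 0 ∧ assoc b a a = 0) :=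
  ⟨fun a σ => Perm.apply_comp_eq_sign_smul (fun a : Fin 3 → F8 → ℝ => assoc (a 0) (a 1) (a 2))
      assoc_comp_swap σ a,
    fun a b => ⟨self_eq_neg.mp (assoc_swap_left a a b), self_eq_neg.mp (assoc_swap_outer a b a),
      self_eq_neg.mp (assoc_swap_right b a a)⟩⟩
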